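/- arXiv:1306.4849 — 6 statements merged into one kernel-verified Lean document; each statement's English description precedes it below -/
import Mathlib

section
/- Let C be a nonzero cyclic code of length n over F_q with defining set S_C and distance d, and suppose gcd(n,q)=1. Suppose there are natural numbers ℓ, m, r, s with 1 ≤ m ≤ ℓ, r ≥ 1, s ≥ 1, and an index i_0 ∈ {0,…,n−1} such that: (a) (i_0+j)_n ∈ S_C for all j = 0,…,ℓ−1, and (b) (i_0+ℓ+r+h(m+r)+t)_n ∈ S_C for all t = 0,…,m−1 and all h = 0,…,s−1. Then: if gcd(m+r,n) ≤ m, one has d ≥ ℓ + 1 + s − r·⌊ℓ/(m+r)⌋ − max{(ℓ)_{m+r} − m, 0}; otherwise d ≥ ℓ + 1. -/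
/-!
For a nonzero codeword `c`, the values `f u = c(α ^ (i₀ + u))` form an exponential sum
`∑ cᵢ (α ^ i) ^ u` with `wt c` terms, so every matrix `(f (a + b a'))_{a, a' ∈ S}` has rank at
most `wt c`; if it is triangular with nonzero diagonal, then `#S ≤ wt c`. The defining set makes
`f` vanish on a run `[0, ℓ)` and on `s` blocks `ℓ + r + h (m + r) + [0, m)`.

If `T` is the first index with `f T ≠ 0`, then `T ≥ ℓ` and the rows `a ≤ T` with columns `T - a`
give the BCH bound `ℓ + 1`. If `gcd (m + r, n) ≤ m`, the translates of the block pattern meet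
every residue class mod `n`, so some later block carries a nonzero value `f P`; for the first
such block, the block positions `a` (columns `P - a`) together with those run positions that
shifts by multiples of `m + r` move into blocks (columns `T - a`) give a triangular matrix with
`m ⌊ℓ / (m + r)⌋ + min (ℓ mod (m + r)) m + s + 1` rows.
-/

open Polynomial Finset

/-- The matrix `(f (a + b a'))_{a, a' ∈ S}`, a minor of the Hankel matrix of `f`, is lower
triangular with nonzero diagonal. -/
def IsTriangularMinor {M : Type*} [Zero M] (f : ℕ → M) (S : Finset ℕ) (b : ℕ → ℕ) : Prop :=
  (∀ a ∈ S, f (a + b a) ≠ 0) ∧ ∀ a ∈ S, ∀ a' ∈ S, a < a' → f (a + b a') = 0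

namespace IsTriangularMinor

variable {F : Type*} [Field F] {f : ℕ → F} {S : Finset ℕ} {b : ℕ → ℕ}

theorem card_le {ι : Type*} [Fintype ι] (h : IsTriangularMinor f S b) (c x : ι → F)
    (hf : ∀ v, f v = ∑ i, c i * x i ^ v) : #S ≤ Fintype.card ι := by
  classical
  let A : Matrix S S F := Matrix.of fun a a' => f (a + b a')
  have hA : A = Matrix.of (fun (a : S) i => x i ^ (a : ℕ)) * Matrix.diagonal c *
      Matrix.of (fun i (a' : S) => x i ^ b a') := by
    ext a a'
    rw [Matrix.mul_apply]
    simp only [A, hf, Matrix.mul_diagonal, Matrix.of_apply]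
    exact sum_congr rfl fun i _ => by ring
  have hdet : A.det ≠ 0 := by
    rw [Matrix.det_of_isLowerTriangular A fun a a' hlt => h.2 _ a.2 _ a'.2 hlt]
    exact prod_ne_zero_iff.2 fun a _ => h.1 a a.2
  calc #S = A.rank := by
        rw [A.rank_of_isUnit ((A.isUnit_iff_isUnit_det).2 hdet.isUnit), Fintype.card_coe]
    _ ≤ Fintype.card ι := hA ▸ (Matrix.rank_mul_le_left _ _).trans (Matrix.rank_le_card_width _)

theorem card_le_card_support {K : Type*} [Field K] [Algebra K F] {p : K[X]} {β : F} {a₀ : ℕ}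
    (h : IsTriangularMinor (fun v => aeval (β ^ (a₀ + v)) p) S b) : #S ≤ #p.support := by
  refine (h.card_le (fun e : p.support => algebraMap K F (p.coeff e) * β ^ (a₀ * e))
    (fun e => β ^ (e : ℕ)) fun v => ?_).trans (Fintype.card_coe _).le
  rw [aeval_def, eval₂_eq_sum, Polynomial.sum_def, ← sum_coe_sort]
  exact sum_congr rfl fun e _ => by ring

end IsTriangularMinor

namespace Nat

theorem count_mod_lt_of_le {p m e : ℕ} (hm : m ≤ p) (he : e ≤ p) :
    count (· % p < m) e = min e m := by
  rw [count_eq_card_filter_range, ← card_range (min e m)]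
  congr 1
  ext x
  simp only [mem_filter, mem_range, lt_min_iff]
  constructor <;> rintro ⟨hxe, hxm⟩ <;> rw [mod_eq_of_lt (by omega)] at * <;> omega

theorem count_mod_lt {p m : ℕ} (hm : m ≤ p) (hp : 0 < p) (N : ℕ) :
    count (· % p < m) N = N / p * m + min (N % p) m := by
  suffices ∀ k, count (· % p < m) (p * k + N % p) = k * m + min (N % p) m by
    simpa only [div_add_mod] using this (N / p)
  intro k
  induction k with
  | zero => simpa using count_mod_lt_of_le hm (mod_lt N hp).le
  | succ k ih =>
    rw [show p * (k + 1) + N % p = p + (p * k + N % p) by ring, count_add,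
      count_mod_lt_of_le hm le_rfl, min_eq_right hm]
    simp only [add_mod_left]
    rw [ih]
    ring

theorem exists_add_modEq {n : ℕ} (hn : 0 < n) (a v : ℕ) : ∃ u, a + u ≡ v [MOD n] :=
  ⟨n * a - a + v, by
    rw [ModEq, show a + (n * a - a + v) = v + n * a by
      have := Nat.le_mul_of_pos_left a hn; omega, add_mul_mod_self_left]⟩

theorem exists_add_mul_add_modEq_of_gcd_le {p m n : ℕ} (hn : 0 < n) (hgcd : gcd p n ≤ m)
    (a v : ℕ) : ∃ h t, t < m ∧ a + h * p + t ≡ v [MOD n] := by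
  obtain ⟨w, hw⟩ := exists_add_modEq hn a v
  -- Multiples of `p` reach every multiple of `gcd p n` mod `n`; `t` absorbs `w % gcd p n`.
  obtain ⟨x, hx⟩ : ∃ x, p * x ≡ gcd p n [MOD n] := by
    rcases (gcd_le_right p hn).lt_or_eq with hlt | heq
    · obtain ⟨x, -, hx⟩ := exists_mul_mod_eq_gcd hlt
      exact ⟨x, hx.trans (mod_eq_of_lt hlt).symm⟩
    · exact ⟨0, by rw [heq, mul_zero]; exact (modEq_zero_iff_dvd.2 dvd_rfl).symm⟩
  refine ⟨x * (w / gcd p n), w % gcd p n,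
    (mod_lt _ (gcd_pos_of_pos_right p hn)).trans_le hgcd, ?_⟩
  calc a + x * (w / gcd p n) * p + w % gcd p n
      = a + (p * x * (w / gcd p n) + w % gcd p n) := by ring
    _ ≡ a + (gcd p n * (w / gcd p n) + w % gcd p n) [MOD n] :=
        ((hx.mul_right _).add_right _).add_left a
    _ = a + w := by rw [div_add_mod w]
    _ ≡ v [MOD n] := hw

end Nat

/-- Run positions `ℓ - 1 - y` whose translates by multiples of `m + r` can only leave the run
into a block, and the first `H + 1` block positions with offset `t₀`. -/
def blockPatternRows (ℓ m r H t₀ : ℕ) : Finset ℕ :=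
  {y ∈ range ℓ | y % (m + r) < m}.image (ℓ - 1 - ·) ∪
    (range (H + 1)).image (fun h => ℓ + r + h * (m + r) + t₀)

section Combinatorics

variable {M : Type*} [Zero M] {f : ℕ → M}

theorem exists_ne_zero_forall_lt_eq_zero (h : ∃ u, f u ≠ 0) :
    ∃ T, f T ≠ 0 ∧ ∀ u < T, f u = 0 := by
  classical
  exact ⟨Nat.find h, Nat.find_spec h, fun _ hu => not_not.1 (Nat.find_min h hu)⟩

theorem isTriangularMinor_range {T : ℕ} (hT : f T ≠ 0) (hzero : ∀ u < T, f u = 0) :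
    IsTriangularMinor f (range (T + 1)) (T - ·) := by
  refine ⟨fun a ha => ?_, fun a _ a' ha' hlt => hzero _ ?_⟩
  · rw [mem_range] at ha
    rwa [Nat.add_sub_cancel' (by omega)]
  · rw [mem_range] at ha'
    beta_reduce
    omega

theorem eq_zero_of_run_of_blocks {ℓ m r H : ℕ} (hrun : ∀ u < ℓ, f u = 0)
    (hblock : ∀ h < H, ∀ t < m, f (ℓ + r + h * (m + r) + t) = 0)
    {y : ℕ} (hyℓ : y < ℓ) (hy : y % (m + r) < m) {w : ℕ} (hw : w ≤ H) :
    f (ℓ - 1 - y + w * (m + r)) = 0 := by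
  have hdiv := Nat.div_add_mod' y (m + r)
  generalize y / (m + r) = q at hdiv
  -- A shift that leaves the run lands in block `w - q - 1` at offset `m - 1 - y % (m + r)`.
  rcases le_or_gt w q with hwq | hwq
  · have := Nat.mul_le_mul_right (m + r) hwq
    exact hrun _ (by omega)
  · obtain ⟨w', rfl⟩ := Nat.exists_eq_add_of_lt hwq
    have hsplit : (q + w' + 1) * (m + r) = q * (m + r) + w' * (m + r) + (m + r) := by ring
    convert hblock w' (by omega) (m - 1 - y % (m + r)) (by omega) using 2
    omega

theorem isTriangularMinor_blockPatternRows {ℓ m r T H t₀ : ℕ} (hT : f T ≠ 0)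
    (hrun : ∀ u < T, f u = 0) (hℓT : ℓ ≤ T)
    (hblock : ∀ h < H, ∀ t < m, f (ℓ + r + h * (m + r) + t) = 0) (ht₀ : t₀ < m)
    (hP : f (ℓ + r + H * (m + r) + t₀) ≠ 0) :
    IsTriangularMinor f (blockPatternRows ℓ m r H t₀)
      (fun a => (if a < ℓ then T else ℓ + r + H * (m + r) + t₀) - a) := by
  have hle : ∀ h ≤ H, h * (m + r) ≤ H * (m + r) := fun h hh => Nat.mul_le_mul_right _ hh
  have hsub : ∀ h ≤ H,
      ℓ + r + H * (m + r) + t₀ - (ℓ + r + h * (m + r) + t₀) = (H - h) * (m + r) := by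
    intro h hh
    rw [Nat.sub_mul]
    have := hle h hh
    omega
  simp only [IsTriangularMinor, blockPatternRows, mem_union, mem_image, mem_filter, mem_range]
  refine ⟨?_, ?_⟩
  · rintro _ (⟨y, ⟨hy, -⟩, rfl⟩ | ⟨h, hh, rfl⟩)
    · rwa [if_pos (by omega), Nat.add_sub_cancel' (by omega)]
    · have := hle h (by omega)
      rwa [if_neg (by omega), Nat.add_sub_cancel' (by omega)]
  · rintro a ha _ (⟨y', ⟨hy', -⟩, rfl⟩ | ⟨h', hh', rfl⟩) hlt
    · rw [if_pos (by omega)]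
      exact hrun _ (by omega)
    rw [if_neg (by omega), hsub h' (by omega)]
    rcases ha with ⟨y, ⟨hy, hym⟩, rfl⟩ | ⟨h, hh, rfl⟩
    · exact eq_zero_of_run_of_blocks (fun u hu => hrun u (by omega)) hblock hy hym (Nat.sub_le _ _)
    · have hhh' : h < h' := lt_of_mul_lt_mul_right (a := m + r) (by omega) (Nat.zero_le _)
      convert hblock (h + (H - h')) (by omega) t₀ ht₀ using 2
      ring

theorem card_blockPatternRows (ℓ m r H t₀ : ℕ) (hp : 0 < m + r) :
    #(blockPatternRows ℓ m r H t₀) = Nat.count (· % (m + r) < m) ℓ + (H + 1) := by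
  rw [blockPatternRows, card_union_of_disjoint, card_image_of_injOn, card_image_of_injective,
    card_range, Nat.count_eq_card_filter_range]
  · intro h h' e
    exact Nat.eq_of_mul_eq_mul_right hp (by simp only at e; omega)
  · intro y hy y' hy' e
    simp only [coe_filter, mem_range, Set.mem_ofPred_eq] at hy hy' e
    omega
  · simp only [disjoint_left, mem_image, mem_filter, mem_range]
    rintro _ ⟨y, ⟨hy, -⟩, rfl⟩ ⟨h, -, e⟩
    omega

theorem exists_isTriangularMinor_of_blocks {ℓ m r s : ℕ} (hp : 0 < m + r)
    (hrun : ∀ u < ℓ, f u = 0)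
    (hblock : ∀ h < s, ∀ t < m, f (ℓ + r + h * (m + r) + t) = 0)
    (hne : ∃ h, ∃ t < m, f (ℓ + r + h * (m + r) + t) ≠ 0) :
    ∃ S b, IsTriangularMinor f S b ∧ Nat.count (· % (m + r) < m) ℓ + s + 1 ≤ #S := by
  classical
  obtain ⟨T, hT, hrunT⟩ := exists_ne_zero_forall_lt_eq_zero
    (let ⟨_, _, _, h⟩ := hne; ⟨_, h⟩)
  obtain ⟨t₀, ht₀, hP⟩ := Nat.find_spec hne
  have hblockH : ∀ h < Nat.find hne, ∀ t < m, f (ℓ + r + h * (m + r) + t) = 0 := by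
    intro h hh t ht
    exact not_not.1 fun hne' => Nat.find_min hne hh ⟨t, ht, hne'⟩
  have hsH : s ≤ Nat.find hne := not_lt.1 fun h => hP (hblock _ h t₀ ht₀)
  have hℓT : ℓ ≤ T := not_lt.1 fun h => hT (hrun T h)
  refine ⟨_, _, isTriangularMinor_blockPatternRows hT hrunT hℓT hblockH ht₀ hP, ?_⟩
  rw [card_blockPatternRows _ _ _ _ _ hp]
  omega

theorem exists_isTriangularMinor_of_run {ℓ : ℕ} (hrun : ∀ u < ℓ, f u = 0) (hne : ∃ u, f u ≠ 0) :
    ∃ S b, IsTriangularMinor f S b ∧ ℓ + 1 ≤ #S := by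
  obtain ⟨T, hT, hrunT⟩ := exists_ne_zero_forall_lt_eq_zero hne
  refine ⟨_, _, isTriangularMinor_range hT hrunT, ?_⟩
  rw [card_range]
  exact Nat.succ_le_succ (not_lt.1 fun h => hT (hrun T h))

end Combinatorics

section Codes

variable {K F : Type*} [Field K] [Field F] [Algebra K F] {n : ℕ}

theorem sum_C_mul_X_pow_eq_ofFn [DecidableEq K] (c : Fin n → K) :
    ∑ i : Fin n, C (c i) * X ^ (i : ℕ) = ofFn n c := by
  simp only [ofFn_eq_sum_monomial, C_mul_X_pow_eq_monomial]

theorem card_support_ofFn_le [DecidableEq K] (c : Fin n → K) :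
    #(ofFn n c).support ≤ #{i | c i ≠ 0} := by
  refine (card_le_card fun k hk => ?_).trans (card_image_le (f := Fin.val))
  rw [mem_support_iff] at hk
  have hkn : k < n := not_le.1 fun h => hk (ofFn_coeff_eq_zero_of_ge c h)
  rw [ofFn_coeff_eq_val_of_lt c hkn] at hk
  exact mem_image.2 ⟨⟨k, hkn⟩, mem_filter.2 ⟨mem_univ _, hk⟩, rfl⟩

theorem exists_aeval_pow_ne_zero {p : K[X]} {α : F} (hα : IsPrimitiveRoot α n) (hp : p ≠ 0)
    (hdeg : p.natDegree < n) : ∃ v, aeval (α ^ v) p ≠ 0 := by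
  by_contra! h
  refine hp ((Polynomial.map_eq_zero_iff (algebraMap K F).injective).1 ?_)
  refine eq_zero_of_natDegree_lt_card_of_eval_eq_zero _ (f := fun i : Fin n => α ^ (i : ℕ))
    (fun i j hij => Fin.ext (hα.pow_inj i.2 j.2 hij)) (fun i => ?_) ?_
  · rw [eval_map_algebraMap]
    exact h i
  · rwa [natDegree_map, Fintype.card_fin]

end Codes

theorem bound_I_general
    (n : ℕ) (hn : 1 ≤ n)
    (Fq F : Type) [Field Fq] [DecidableEq Fq]
    [Field F] [Algebra Fq F]
    (α : F) (hα : IsPrimitiveRoot α n)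
    (g : Polynomial Fq)
    (C : Set (Fin n → Fq))
    (hC : C = { c | g ∣ ∑ i : Fin n, Polynomial.C (c i) * X ^ (i : ℕ) })
    (SC : Set ℕ)
    (hSC : SC = { i | i < n ∧ Polynomial.aeval (α ^ i) g = 0 })
    (wt : (Fin n → Fq) → ℕ)
    (hwt : ∀ c, wt c = (Finset.univ.filter fun i => c i ≠ 0).card)
    (d : ℕ) (hd : IsLeast { w | ∃ c ∈ C, c ≠ 0 ∧ wt c = w } d)
    (ℓ m r s i₀ : ℕ)
    (ha : ∀ j < ℓ, (i₀ + j) % n ∈ SC)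
    (hb : ∀ t < m, ∀ h < s, (i₀ + ℓ + r + h * (m + r) + t) % n ∈ SC) :
    (Nat.gcd (m + r) n ≤ m →
      d ≥ ℓ + 1 + s - r * (ℓ / (m + r)) - max (ℓ % (m + r) - m) 0) ∧
    (¬ Nat.gcd (m + r) n ≤ m → d ≥ ℓ + 1) := by
  obtain ⟨c, hcC, hc0, rfl⟩ := hd.1
  rw [hC, Set.mem_ofPred_eq, sum_C_mul_X_pow_eq_ofFn] at hcC
  let f : ℕ → F := fun u => aeval (α ^ (i₀ + u)) (ofFn n c)
  have hweight : ∀ S b, IsTriangularMinor f S b → #S ≤ wt c := fun S b h =>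
    h.card_le_card_support.trans (hwt c ▸ card_support_ofFn_le c)
  have hf : ∀ u v, i₀ + u ≡ v [MOD n] → f u = aeval (α ^ v) (ofFn n c) := fun u v h => by
    simp only [f, pow_eq_pow_of_modEq h hα.pow_eq_one]
  have hzero : ∀ u, (i₀ + u) % n ∈ SC → f u = 0 := fun u hu => by
    rw [hSC] at hu
    rw [hf u _ (Nat.mod_modEq _ _).symm]
    exact aeval_eq_zero_of_dvd_aeval_eq_zero hcC hu.2
  have hp0 : ofFn n c ≠ 0 := (injective_ofFn n).ne hc0 |>.trans_eq (map_zero _)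
  obtain ⟨v, hv⟩ := exists_aeval_pow_ne_zero hα hp0 (ofFn_natDegree_lt hn c)
  have hrun : ∀ u < ℓ, f u = 0 := fun u hu => hzero u (ha u hu)
  refine ⟨fun hsmall => ?_, fun _ => ?_⟩
  · obtain ⟨h, t, ht, hmod⟩ := Nat.exists_add_mul_add_modEq_of_gcd_le hn hsmall (i₀ + ℓ + r) v
    have hp : 0 < m + r := by omega
    obtain ⟨S, b, hS, hcard⟩ := exists_isTriangularMinor_of_blocks hp hrun
      (fun h hh t ht => hzero _ (by simpa only [add_assoc] using hb t ht h hh))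
      ⟨h, t, ht, by rwa [hf _ v (by simpa only [add_assoc] using hmod)]⟩
    rw [Nat.count_mod_lt (by omega) hp] at hcard
    have := hweight S b hS
    have := Nat.div_add_mod ℓ (m + r)
    have : (m + r) * (ℓ / (m + r)) = ℓ / (m + r) * m + r * (ℓ / (m + r)) := by ring
    omega
  · obtain ⟨u, hu⟩ := Nat.exists_add_modEq hn i₀ v
    obtain ⟨S, b, hS, hcard⟩ := exists_isTriangularMinor_of_run hrun ⟨u, by rwa [hf u v hu]⟩
    exact hcard.trans (hweight S b hS)

/-- Bound I (Proposition `bound I` of Piva–Sala).  `C` is a nonzero cyclic code of length `n`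
over the finite field `Fq` with `q` elements, given by a monic generator polynomial `g`
dividing `X^n - 1`; `SC` is its complete defining set with respect to a primitive `n`-th
root of unity `α` in the splitting field `F`; `wt` is the Hamming weight and `d` the
minimum distance.  If the defining set contains the pattern of roots described by the
parameters `ℓ, m, r, s, i₀`, then the stated lower bounds on `d` hold. -/
theorem bound_I
    (q n : ℕ) (hq : IsPrimePow q) (hn : 1 ≤ n) (hgcd : Nat.gcd n q = 1)
    (Fq F : Type) [Field Fq] [Fintype Fq] [DecidableEq Fq]
    (hcard : Fintype.card Fq = q)
    [Field F] [Algebra Fq F]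
    (hsplit : IsSplittingField Fq F (X ^ n - 1 : Polynomial Fq))
    (α : F) (hα : IsPrimitiveRoot α n)
    (g : Polynomial Fq) (hmonic : g.Monic) (hdvd : g ∣ X ^ n - 1)
    (C : Set (Fin n → Fq))
    (hC : C = { c | g ∣ ∑ i : Fin n, Polynomial.C (c i) * X ^ (i : ℕ) })
    (SC : Set ℕ)
    (hSC : SC = { i | i < n ∧ Polynomial.aeval (α ^ i) g = 0 })
    (wt : (Fin n → Fq) → ℕ)
    (hwt : ∀ c, wt c = (Finset.univ.filter fun i => c i ≠ 0).card)
    (d : ℕ) (hd : IsLeast { w | ∃ c ∈ C, c ≠ 0 ∧ wt c = w } d)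
    (ℓ m r s i₀ : ℕ)
    (hm1 : 1 ≤ m) (hmℓ : m ≤ ℓ) (hr1 : 1 ≤ r) (hs1 : 1 ≤ s) (hi₀ : i₀ < n)
    (ha : ∀ j < ℓ, (i₀ + j) % n ∈ SC)
    (hb : ∀ t < m, ∀ h < s, (i₀ + ℓ + r + h * (m + r) + t) % n ∈ SC) :
    (Nat.gcd (m + r) n ≤ m →
      d ≥ ℓ + 1 + s - r * (ℓ / (m + r)) - max (ℓ % (m + r) - m) 0) ∧
    (¬ Nat.gcd (m + r) n ≤ m → d ≥ ℓ + 1) :=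
  bound_I_general n hn Fq F α hα g C hC SC hSC wt hwt d hd ℓ m r s i₀ ha hb
end

section
/- (Hartmann–Tzeng bound.) Let C be a nonzero cyclic code of length n over F_q with generator polynomial g and distance d, and suppose gcd(n,q)=1. Suppose there exist natural numbers i_0, m, s, r with m ≥ 1, s ≥ 1, and gcd(m+r, n) = 1, such that g(α^{i_0+i+j(m+r)}) = 0 for all 0 ≤ i ≤ m−1 and all 0 ≤ j ≤ s−1. Then d ≥ m + s. -/
/-!
Let `c` be a codeword of minimum weight `w`, supported on `S`. With `x_t = α^t`,
`z_t = (α^(m+r))^t` and `u_t = c_t α^(i₀ t)` for `t ∈ S`, the root conditions say that the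
`m × S` matrix `(x_t^i)` times the `S × s` matrix `(u_t z_t^j)` vanishes. Both `α` and `α^(m+r)`
are primitive `n`-th roots of unity, so the nodes are distinct and both matrices are
Vandermonde-like of full rank `min m w` and `min s w`. Sylvester's rank inequality gives
`min m w + min s w ≤ w`, which forces `m + s ≤ w` because `m`, `s` and `w` are positive.
-/

open Polynomial Matrix

section RankBound

variable {ι : Type*} [Fintype ι]

theorem linearIndependent_mul_pow {R : Type*} [CommRing R] [IsDomain R] {u x : ι → R}
    (hu : ∀ y, u y ≠ 0) (hx : Function.Injective x) {a : ℕ} (ha : a ≤ Fintype.card ι) :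
    LinearIndependent R fun (i : Fin a) (y : ι) => u y * x y ^ (i : ℕ) := by
  rw [Fintype.linearIndependent_iff]
  intro coef hcoef
  obtain ⟨e⟩ :=
    Function.Embedding.nonempty_of_card_le (α := Fin a) (β := ι) (by simpa using ha)
  suffices coef = 0 from congrFun this
  refine Matrix.eq_zero_of_forall_index_sum_mul_pow_eq_zero (f := x ∘ e) (hx.comp e.injective)
    fun k => (mul_eq_zero.mp ?_).resolve_left (hu (e k))
  simpa [Finset.mul_sum, mul_left_comm] using congrFun hcoef (e k)

variable {F : Type*} [Field F]

theorem add_le_card_of_sum_mul_pow_mul_pow_eq_zero_of_le {x z u : ι → F}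
    (hx : Function.Injective x) (hz : Function.Injective z) (hu : ∀ y, u y ≠ 0) {a b : ℕ}
    (ha : a ≤ Fintype.card ι) (hb : b ≤ Fintype.card ι)
    (h : ∀ i < a, ∀ j < b, ∑ y, u y * x y ^ i * z y ^ j = 0) :
    a + b ≤ Fintype.card ι := by
  let A : Matrix (Fin a) ι F := Matrix.of fun i y => x y ^ (i : ℕ)
  let B : Matrix (Fin b) ι F := Matrix.of fun j y => u y * z y ^ (j : ℕ)
  have hAB : A * Bᵀ = 0 := by
    ext i j
    simpa [A, B, Matrix.mul_apply, mul_left_comm, mul_assoc] using h i i.isLt j j.isLt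
  have hA : A.rank = a := by
    have hrows := linearIndependent_mul_pow (u := 1) (fun _ => one_ne_zero) hx ha
    simp only [Pi.one_apply, one_mul] at hrows
    exact (LinearIndependent.rank_matrix (M := A) hrows).trans (Fintype.card_fin a)
  have hB : B.rank = b :=
    (LinearIndependent.rank_matrix (M := B) (linearIndependent_mul_pow hu hz hb)).trans
      (Fintype.card_fin b)
  simpa [hA, hB] using Matrix.rank_add_rank_le_card_of_mul_eq_zero hAB

theorem add_le_card_of_sum_mul_pow_mul_pow_eq_zero [Nonempty ι] {x z u : ι → F}
    (hx : Function.Injective x) (hz : Function.Injective z) (hu : ∀ y, u y ≠ 0) {a b : ℕ}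
    (ha : 1 ≤ a) (hb : 1 ≤ b) (h : ∀ i < a, ∀ j < b, ∑ y, u y * x y ^ i * z y ^ j = 0) :
    a + b ≤ Fintype.card ι := by
  have := add_le_card_of_sum_mul_pow_mul_pow_eq_zero_of_le hx hz hu
    (min_le_right a (Fintype.card ι)) (min_le_right b (Fintype.card ι))
    fun i hi j hj => h i (hi.trans_le (min_le_left _ _)) j (hj.trans_le (min_le_left _ _))
  have := Fintype.card_pos (α := ι)
  omega

end RankBound

theorem sum_support_algebraMap_mul_pow_eq_zero {K L : Type*} [CommRing K] [DecidableEq K]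
    [CommRing L] [Algebra K L] {n : ℕ} {c : Fin n → K} {g : K[X]}
    (hg : g ∣ ∑ i : Fin n, C (c i) * X ^ (i : ℕ)) {β : L} (hβ : aeval β g = 0) :
    ∑ t : {i // c i ≠ 0}, algebraMap K L (c t) * β ^ (t.1 : ℕ) = 0 := by
  obtain ⟨h, hh⟩ := hg
  have hcodeword : ∑ i : Fin n, algebraMap K L (c i) * β ^ (i : ℕ) = 0 := by
    simpa [hβ] using congrArg (aeval β) hh
  rw [← hcodeword, ← Finset.sum_filter_of_ne (p := fun i => c i ≠ 0)
      fun i _ hi hci => hi (by rw [hci, map_zero, zero_mul]),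
    Finset.sum_subtype (p := fun i => c i ≠ 0) _ fun i => by simp]

theorem hartmann_tzeng_general
    (n : ℕ)
    (Fq F : Type) [Field Fq] [DecidableEq Fq]
    [Field F] [Algebra Fq F]
    (α : F) (hα : IsPrimitiveRoot α n)
    (g : Polynomial Fq)
    (C : Set (Fin n → Fq))
    (hC : C = { c | g ∣ ∑ i : Fin n, Polynomial.C (c i) * X ^ (i : ℕ) })
    (wt : (Fin n → Fq) → ℕ)
    (hwt : ∀ c, wt c = (Finset.univ.filter fun i => c i ≠ 0).card)
    (d : ℕ) (hd : IsLeast { w | ∃ c ∈ C, c ≠ 0 ∧ wt c = w } d)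
    (i₀ m s r : ℕ) (hm : 1 ≤ m) (hs : 1 ≤ s) (hmr : Nat.gcd (m + r) n = 1)
    (hroots : ∀ i < m, ∀ j < s, Polynomial.aeval (α ^ (i₀ + i + j * (m + r))) g = 0) :
    d ≥ m + s := by
  obtain ⟨⟨c, hc, hc0, rfl⟩, -⟩ := hd
  rw [hC] at hc
  obtain ⟨t₀, ht₀⟩ := Function.ne_iff.mp hc0
  have : Nonempty {t // c t ≠ 0} := ⟨⟨t₀, ht₀⟩⟩
  have hα0 : α ≠ 0 := hα.ne_zero (Nat.zero_lt_of_lt t₀.isLt).ne'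
  have hpow_inj {ζ : F} (hζ : IsPrimitiveRoot ζ n) :
      Function.Injective fun t : {t // c t ≠ 0} => ζ ^ (t.1 : ℕ) :=
    fun t t' h => Subtype.ext (Fin.ext (hζ.pow_inj t.1.isLt t'.1.isLt h))
  rw [hwt, ← Fintype.card_subtype]
  refine add_le_card_of_sum_mul_pow_mul_pow_eq_zero
    (u := fun t : {t // c t ≠ 0} => algebraMap Fq F (c t) * (α ^ i₀) ^ (t.1 : ℕ))
    (hpow_inj hα) (hpow_inj (hα.pow_of_coprime _ hmr))
    (fun t => mul_ne_zero ((_root_.map_ne_zero _).mpr t.2) (pow_ne_zero _ (pow_ne_zero _ hα0)))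
    hm hs fun i hi j hj => ?_
  rw [← sum_support_algebraMap_mul_pow_eq_zero hc (hroots i hi j hj)]
  exact Finset.sum_congr rfl fun t _ => by ring

/-- The Hartmann–Tzeng bound.  `C` is a nonzero cyclic code of length `n` over the finite
field `Fq` with `q` elements, given by a monic generator polynomial `g` dividing `X^n - 1`;
`α` is a primitive `n`-th root of unity in the splitting field `F`; `wt` is the Hamming
weight and `d` the minimum distance. -/
theorem hartmann_tzeng
    (q n : ℕ) (hq : IsPrimePow q) (hn : 1 ≤ n) (hgcd : Nat.gcd n q = 1)
    (Fq F : Type) [Field Fq] [Fintype Fq] [DecidableEq Fq]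
    (hcard : Fintype.card Fq = q)
    [Field F] [Algebra Fq F]
    (hsplit : IsSplittingField Fq F (X ^ n - 1 : Polynomial Fq))
    (α : F) (hα : IsPrimitiveRoot α n)
    (g : Polynomial Fq) (hmonic : g.Monic) (hdvd : g ∣ X ^ n - 1)
    (C : Set (Fin n → Fq))
    (hC : C = { c | g ∣ ∑ i : Fin n, Polynomial.C (c i) * X ^ (i : ℕ) })
    (wt : (Fin n → Fq) → ℕ)
    (hwt : ∀ c, wt c = (Finset.univ.filter fun i => c i ≠ 0).card)
    (d : ℕ) (hd : IsLeast { w | ∃ c ∈ C, c ≠ 0 ∧ wt c = w } d)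
    (i₀ m s r : ℕ) (hm : 1 ≤ m) (hs : 1 ≤ s) (hmr : Nat.gcd (m + r) n = 1)
    (hroots : ∀ i < m, ∀ j < s, Polynomial.aeval (α ^ (i₀ + i + j * (m + r))) g = 0) :
    d ≥ m + s :=
  hartmann_tzeng_general n Fq F α hα g C hC wt hwt d hd i₀ m s r hm hs hmr hroots
end

section
/- (Hartmann–Tzeng bound, Roos's improved version.) Let C be a nonzero cyclic code of length n over F_q with generator polynomial g and distance d, and suppose gcd(n,q)=1. Suppose there exist natural numbers i_0, m, s, r with m ≥ 1, s ≥ 1, and gcd(m+r, n) ≤ m, such that g(α^{i_0+i+j(m+r)}) = 0 for all 0 ≤ i ≤ m−1 and all 0 ≤ j ≤ s−1. Then d ≥ m + s. -/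
open Polynomial Finset

/-!
A codeword `c` of minimal weight with support `K` gives, at the prescribed zeros of `g`,
`∑_{k ∈ K} a_k x_k^i y_k^j = 0` for `i < m`, `j < s`, where `x_k = α^k`, `y_k = α^(k(m+r))` and
`a_k = c_k α^(k i₀) ≠ 0`. The `x_k` are distinct, and each value of `y` is taken at most
`gcd(m+r, n) ≤ m` times. A Vandermonde argument in `i` gives `#K > m`, and each further
moment `j` costs at least one more point of `K`.
-/

namespace Finset

variable {ι E : Type*} [Field E] {K : Finset ι} {x a : ι → E}

theorem eq_zero_of_forall_sum_mul_pow_eq_zero (hx : Set.InjOn x K)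
    (h : ∀ i < #K, ∑ k ∈ K, a k * x k ^ i = 0) : ∀ k ∈ K, a k = 0 := by
  let e : Fin #K ≃ K := K.equivFin.symm
  have he : a ∘ (↑) ∘ e = 0 := by
    refine Matrix.eq_zero_of_forall_pow_sum_mul_pow_eq_zero
      (fun u v huv ↦ e.injective (Subtype.ext (hx (e u).2 (e v).2 huv))) fun i ↦ ?_
    rw [← h i i.2, ← K.sum_coe_sort]
    exact e.sum_comp fun k : K ↦ a k * x k ^ (i : ℕ)
  intro k hk
  simpa [e] using congrFun he (K.equivFin ⟨k, hk⟩)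

theorem lt_card_of_forall_sum_mul_pow_eq_zero {m : ℕ} (hK : K.Nonempty) (hx : Set.InjOn x K)
    (ha : ∀ k ∈ K, a k ≠ 0) (h : ∀ i < m, ∑ k ∈ K, a k * x k ^ i = 0) : m < #K := by
  by_contra! hKm
  obtain ⟨k, hk⟩ := hK
  exact ha k hk (eq_zero_of_forall_sum_mul_pow_eq_zero hx (fun i hi ↦ h i (hi.trans_le hKm)) k hk)

/-- Roos's lemma. Multiplying the weights by `y k - y k₀` turns the vanishing of the moments
`j, j + 1` into that of the moment `j` and removes the `y`-fibre of `k₀` (at most `m` points)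
from the support, so `s` drops by one while `#K` drops by at least one. -/
theorem add_le_card_of_forall_sum_mul_pow_mul_pow_eq_zero [DecidableEq E] {y : ι → E} {m s : ℕ}
    (hs : 1 ≤ s) (hK : K.Nonempty) (hx : Set.InjOn x K) (ha : ∀ k ∈ K, a k ≠ 0)
    (hy : ∀ k₀ ∈ K, #{k ∈ K | y k = y k₀} ≤ m)
    (h : ∀ i < m, ∀ j < s, ∑ k ∈ K, a k * x k ^ i * y k ^ j = 0) : m + s ≤ #K := by
  induction s, hs using Nat.le_induction generalizing K a with
  | base =>
    exact lt_card_of_forall_sum_mul_pow_eq_zero hK hx ha fun i hi ↦ by simpa using h i hi 0 one_pos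
  | succ s hs ih =>
    have hmK : m < #K :=
      lt_card_of_forall_sum_mul_pow_eq_zero hK hx ha fun i hi ↦ by simpa using h i hi 0 (by omega)
    obtain ⟨k₀, hk₀⟩ := hK
    set K' := {k ∈ K | y k ≠ y k₀}
    have hcard : #{k ∈ K | y k = y k₀} + #K' = #K := by
      simpa only [ne_eq] using card_filter_add_card_filter_not (fun k ↦ y k = y k₀) (s := K)
    have hfibre : 0 < #{k ∈ K | y k = y k₀} := card_pos.2 ⟨k₀, mem_filter.2 ⟨hk₀, rfl⟩⟩
    have hK' : K'.Nonempty := card_pos.1 (by have := hy k₀ hk₀; omega)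
    have h' : ∀ i < m, ∀ j < s, ∑ k ∈ K', a k * (y k - y k₀) * x k ^ i * y k ^ j = 0 := by
      intro i hi j hj
      rw [sum_filter_of_ne (p := fun k ↦ y k ≠ y k₀) fun k _ hk hyk ↦ hk (by simp [hyk])]
      calc ∑ k ∈ K, a k * (y k - y k₀) * x k ^ i * y k ^ j
          = ∑ k ∈ K, a k * x k ^ i * y k ^ (j + 1) - y k₀ * ∑ k ∈ K, a k * x k ^ i * y k ^ j := by
            rw [mul_sum, ← sum_sub_distrib]
            exact sum_congr rfl fun k _ ↦ by ring
        _ = 0 := by rw [h i hi (j + 1) (by omega), h i hi j (by omega), mul_zero, sub_zero]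
    have hmsK' := ih hK' (hx.mono (coe_subset.2 (filter_subset _ _)))
      (fun k hk ↦ have hk := mem_filter.1 hk; mul_ne_zero (ha k hk.1) (sub_ne_zero.2 hk.2))
      (fun k₁ hk₁ ↦ (card_le_card (filter_subset_filter _ (filter_subset _ _))).trans
        (hy k₁ (filter_subset _ _ hk₁))) h'
    omega

end Finset

theorem Nat.card_filter_range_modEq_of_dvd {n r : ℕ} (hr : 0 < r) (hrn : r ∣ n) (v : ℕ) :
    #{k ∈ range n | k ≡ v [MOD r]} = n / r := by
  simp [← Nat.count_eq_card_filter_range, Nat.count_modEq_card n hr, Nat.mod_eq_zero_of_dvd hrn]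

theorem IsPrimitiveRoot.card_filter_pow_mul_eq_le_gcd {M : Type*} [CommMonoid M] [DecidableEq M]
    {ζ : M} {n : ℕ} (h : IsPrimitiveRoot ζ n) (b k₀ : ℕ) :
    #{k : Fin n | ζ ^ ((k : ℕ) * b) = ζ ^ (k₀ * b)} ≤ n.gcd b := by
  rcases n.eq_zero_or_pos with rfl | hn
  · simp
  have hr : 0 < n / n.gcd b := Nat.div_pos (Nat.gcd_le_left b hn) (Nat.gcd_pos_of_pos_left b hn)
  have hmod {k : ℕ} (hk : ζ ^ (k * b) = ζ ^ (k₀ * b)) : k ≡ k₀ [MOD n / n.gcd b] := by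
    rw [(h.isOfFinOrder hn.ne').pow_eq_pow_iff_modEq, ← h.eq_orderOf, mul_comm, mul_comm k₀] at hk
    exact Nat.ModEq.cancel_left_div_gcd hn hk
  calc #{k : Fin n | ζ ^ ((k : ℕ) * b) = ζ ^ (k₀ * b)}
      = #{k ∈ range n | ζ ^ (k * b) = ζ ^ (k₀ * b)} := by
        rw [← Nat.Iio_eq_range, ← Fin.map_valEmbedding_univ, filter_map, card_map]
        rfl
    _ ≤ #{k ∈ range n | k ≡ k₀ [MOD n / n.gcd b]} :=
        card_le_card (monotone_filter_right _ fun _ _ ↦ hmod)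
    _ = n / (n / n.gcd b) :=
        Nat.card_filter_range_modEq_of_dvd hr (Nat.div_dvd_of_dvd (Nat.gcd_dvd_left n b)) k₀
    _ = n.gcd b := Nat.div_div_self (Nat.gcd_dvd_left n b) hn.ne'

theorem hartmann_tzeng_roos_general
    (n : ℕ)
    (Fq F : Type) [Field Fq] [DecidableEq Fq]
    [Field F] [Algebra Fq F]
    (α : F) (hα : IsPrimitiveRoot α n)
    (g : Polynomial Fq)
    (C : Set (Fin n → Fq))
    (hC : C = { c | g ∣ ∑ i : Fin n, Polynomial.C (c i) * X ^ (i : ℕ) })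
    (wt : (Fin n → Fq) → ℕ)
    (hwt : ∀ c, wt c = (Finset.univ.filter fun i => c i ≠ 0).card)
    (d : ℕ) (hd : IsLeast { w | ∃ c ∈ C, c ≠ 0 ∧ wt c = w } d)
    (i₀ m s r : ℕ) (hs : 1 ≤ s) (hmr : Nat.gcd (m + r) n ≤ m)
    (hroots : ∀ i < m, ∀ j < s, Polynomial.aeval (α ^ (i₀ + i + j * (m + r))) g = 0) :
    d ≥ m + s := by
  classical
  obtain ⟨c, hc, hc0, rfl⟩ := hd.1
  subst hC
  rw [hwt]
  obtain ⟨k₁, hk₁⟩ := Function.ne_iff.1 hc0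
  have hα0 : α ≠ 0 := hα.ne_zero k₁.pos.ne'
  have hcode (t : ℕ) (ht : aeval (α ^ t) g = 0) :
      ∑ k : Fin n, algebraMap Fq F (c k) * (α ^ t) ^ (k : ℕ) = 0 := by
    simpa [map_sum] using aeval_eq_zero_of_dvd_aeval_eq_zero hc ht
  refine add_le_card_of_forall_sum_mul_pow_mul_pow_eq_zero (x := fun k : Fin n ↦ α ^ (k : ℕ))
    (y := fun k ↦ α ^ ((k : ℕ) * (m + r))) (a := fun k ↦ algebraMap Fq F (c k) * α ^ (i₀ * k))
    hs ⟨k₁, by simpa using hk₁⟩ (fun k _ k' _ h ↦ Fin.ext (hα.pow_inj k.2 k'.2 h))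
    (fun k hk ↦ ?_) (fun k₀ _ ↦ ?_) ?_
  · exact mul_ne_zero ((_root_.map_ne_zero _).2 (mem_filter.1 hk).2) (pow_ne_zero _ hα0)
  · exact (card_le_card (filter_subset_filter _ (subset_univ _))).trans
      ((hα.card_filter_pow_mul_eq_le_gcd _ _).trans (Nat.gcd_comm n (m + r) ▸ hmr))
  · intro i hi j hj
    rw [sum_filter_of_ne (p := fun k ↦ c k ≠ 0) fun k _ hk hck ↦ hk (by simp [hck]),
      ← hcode _ (hroots i hi j hj)]
    exact sum_congr rfl fun k _ ↦ by ring

/-- The Hartmann–Tzeng bound in Roos's improved version, where `gcd(m+r,n) = 1` is relaxed to `gcd(m+r,n) ≤ m`.  `C` is a nonzero cyclic code of length `n` over the finite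
field `Fq` with `q` elements, given by a monic generator polynomial `g` dividing `X^n - 1`;
`α` is a primitive `n`-th root of unity in the splitting field `F`; `wt` is the Hamming
weight and `d` the minimum distance. -/
theorem hartmann_tzeng_roos
    (q n : ℕ) (hq : IsPrimePow q) (hn : 1 ≤ n) (hgcd : Nat.gcd n q = 1)
    (Fq F : Type) [Field Fq] [Fintype Fq] [DecidableEq Fq]
    (hcard : Fintype.card Fq = q)
    [Field F] [Algebra Fq F]
    (hsplit : IsSplittingField Fq F (X ^ n - 1 : Polynomial Fq))
    (α : F) (hα : IsPrimitiveRoot α n)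
    (g : Polynomial Fq) (hmonic : g.Monic) (hdvd : g ∣ X ^ n - 1)
    (C : Set (Fin n → Fq))
    (hC : C = { c | g ∣ ∑ i : Fin n, Polynomial.C (c i) * X ^ (i : ℕ) })
    (wt : (Fin n → Fq) → ℕ)
    (hwt : ∀ c, wt c = (Finset.univ.filter fun i => c i ≠ 0).card)
    (d : ℕ) (hd : IsLeast { w | ∃ c ∈ C, c ≠ 0 ∧ wt c = w } d)
    (i₀ m s r : ℕ) (hm : 1 ≤ m) (hs : 1 ≤ s) (hmr : Nat.gcd (m + r) n ≤ m)
    (hroots : ∀ i < m, ∀ j < s, Polynomial.aeval (α ^ (i₀ + i + j * (m + r))) g = 0) :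
    d ≥ m + s :=
  hartmann_tzeng_roos_general n Fq F α hα g C hC wt hwt d hd i₀ m s r hs hmr hroots
end

section
/- (Betti–Sala bound.) Let C be a nonzero cyclic code of length n over F_q with defining set S_C and distance d, and suppose gcd(n,q)=1. Suppose there are natural numbers λ, μ ≥ 1 and an index i_0 ∈ {0,…,n−1} such that either: (i) (i_0+j)_n ∈ S_C for all j = 0,…,λμ−1 and for all j = (λ+h)μ+1,…,(λ+h)μ+μ−1 with 0 ≤ h ≤ λ; or (ii) (i_0+j)_n ∈ S_C for all j = hμ,…,hμ+μ−2 with 0 ≤ h ≤ λ and for all j = (λ+1)μ,…,(2λ+1)μ−1. Then d ≥ λμ + μ. -/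
/-!
Take a minimum-weight codeword `c` with support `s` and put `β_t = α^t`, `u_t = c_t β_t^{i₀}`.
The hypothesis on the defining set says that the power sums `S_j = ∑_{t ∈ s} u_t β_t^j` vanish
for every `j < (2λ+1)μ` except at the `λ+1` gaps `j = (λ+h)μ`; in case (ii) this holds after
the reflection `j ↦ (2λ+1)μ-1-j`, i.e. for the nodes `β_t⁻¹`. Suppose `|s| < λμ+μ`. Since
`S_0, …, S_{|s|-1}` cannot all vanish (Vandermonde), `S_{λμ} ≠ 0`. Let `σ = ∏_t (X - β_t)` and
let `D ≤ λ` be maximal with `σ_{Dμ} ≠ 0` (`σ_0 ≠ 0`). In the recurrence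
`∑_k σ_k S_{(λ-D)μ+k} = 0` every other gap `(λ+h)μ`, `h > 0`, meets the coefficient
`σ_{(D+h)μ} = 0`, so it reduces to `σ_{Dμ} S_{λμ} = 0`, a contradiction.
-/

open Polynomial Finset

section PowerSum

variable {R ι : Type*} [CommRing R]

def powerSum (s : Finset ι) (u β : ι → R) (j : ℕ) : R := ∑ t ∈ s, u t * β t ^ j

variable {s : Finset ι} {u β : ι → R}

theorem sum_coeff_mul_powerSum (p : R[X]) (x : ℕ) {N : ℕ} (hN : p.natDegree < N) :
    ∑ j ∈ range N, p.coeff j * powerSum s u β (x + j) = ∑ t ∈ s, u t * β t ^ x * p.eval (β t) := by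
  simp_rw [powerSum, mul_sum]
  rw [sum_comm]
  refine sum_congr rfl fun t _ => ?_
  rw [eval_eq_sum_range' hN, mul_sum]
  refine sum_congr rfl fun j _ => ?_
  ring

theorem sum_coeff_mul_powerSum_eq_zero {p : R[X]} (hp : ∀ t ∈ s, p.IsRoot (β t)) (x : ℕ) {N : ℕ}
    (hN : p.natDegree < N) : ∑ j ∈ range N, p.coeff j * powerSum s u β (x + j) = 0 := by
  rw [sum_coeff_mul_powerSum p x hN]
  exact sum_eq_zero fun t ht => by rw [(hp t ht).eq_zero, mul_zero]

variable [IsDomain R]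

theorem exists_powerSum_ne_zero (hβ : Set.InjOn β s) {t₀ : ι} (ht₀ : t₀ ∈ s)
    (hu : u t₀ ≠ 0) : ∃ j < #s, powerSum s u β j ≠ 0 := by
  classical
  by_contra! h
  set p : R[X] := ∏ t ∈ s.erase t₀, (X - C (β t))
  have hp : p.natDegree < #s := by
    rw [natDegree_finsetProd_X_sub_C_eq_card, card_erase_of_mem ht₀]
    exact Nat.sub_lt (card_pos.mpr ⟨t₀, ht₀⟩) one_pos
  have hroot : ∀ t ∈ s, t ≠ t₀ → p.eval (β t) = 0 := fun t ht hne => by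
    rw [eval_prod]
    exact prod_eq_zero (mem_erase.mpr ⟨hne, ht⟩) (by simp)
  have hpt₀ : p.eval (β t₀) ≠ 0 := by
    rw [eval_prod, prod_ne_zero_iff]
    intro t ht
    rw [eval_sub, eval_X, eval_C, sub_ne_zero]
    exact fun h => (mem_erase.mp ht).1 (hβ (mem_erase.mp ht).2 ht₀ h.symm)
  have hsum := sum_coeff_mul_powerSum (s := s) (u := u) (β := β) p 0 hp
  rw [sum_eq_zero fun j hj => by rw [zero_add, h j (mem_range.mp hj), mul_zero],
    sum_eq_single_of_mem t₀ ht₀ fun t ht hne => by rw [hroot t ht hne, mul_zero]] at hsum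
  simp only [pow_zero, mul_one] at hsum
  exact mul_ne_zero hu hpt₀ hsum.symm

end PowerSum

def gappedRange (lam μ : ℕ) : Set ℕ :=
  {j | j < (2 * lam + 1) * μ ∧ ∀ h ≤ lam, j ≠ (lam + h) * μ}

theorem gappedRange_of_blocks {lam μ : ℕ} {P : ℕ → Prop} (h₁ : ∀ j < lam * μ, P j)
    (h₂ : ∀ h ≤ lam, ∀ j, (lam + h) * μ + 1 ≤ j → j + 1 ≤ (lam + h) * μ + μ → P j) :
    ∀ j ∈ gappedRange lam μ, P j := by
  rintro j ⟨hj, hgap⟩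
  rcases lt_or_ge j (lam * μ) with hlt | hge
  · exact h₁ j hlt
  have hμ : 0 < μ := Nat.pos_of_ne_zero (by rintro rfl; simp at hj)
  have hq : j / μ * μ + j % μ = j := Nat.div_add_mod' j μ
  have hr : j % μ < μ := Nat.mod_lt j hμ
  have hlo : lam ≤ j / μ := (Nat.le_div_iff_mul_le hμ).mpr hge
  have hhi : j / μ < 2 * lam + 1 := (Nat.div_lt_iff_lt_mul hμ).mpr hj
  have hlam : lam + (j / μ - lam) = j / μ := by omega
  have hr0 : j % μ ≠ 0 := fun h0 => hgap (j / μ - lam) (by omega) (by rw [hlam]; omega)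
  exact h₂ (j / μ - lam) (by omega) j (by rw [hlam]; omega) (by rw [hlam]; omega)

theorem gappedRange_reflect_of_blocks {lam μ : ℕ} {P : ℕ → Prop}
    (h₁ : ∀ h ≤ lam, ∀ j, h * μ ≤ j → j + 2 ≤ h * μ + μ → P j)
    (h₂ : ∀ j, (lam + 1) * μ ≤ j → j + 1 ≤ (2 * lam + 1) * μ → P j) :
    ∀ j ∈ gappedRange lam μ, P ((2 * lam + 1) * μ - 1 - j) := by
  rintro j ⟨hj, hgap⟩
  set k := (2 * lam + 1) * μ - 1 - j
  rcases le_or_gt ((lam + 1) * μ) k with hge | hlt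
  · exact h₂ k hge (by omega)
  have hμ : 0 < μ := Nat.pos_of_ne_zero (by rintro rfl; simp at hj)
  have hq : k / μ * μ + k % μ = k := Nat.div_add_mod' k μ
  have hr : k % μ < μ := Nat.mod_lt k hμ
  have hhi : k / μ ≤ lam := Nat.lt_succ_iff.mp ((Nat.div_lt_iff_lt_mul hμ).mpr hlt)
  rcases lt_or_ge (k % μ + 1) μ with hr' | hr'
  · exact h₁ (k / μ) hhi k (by omega) (by omega)
  -- `k ≡ -1 (mod μ)` means that `j = (λ + (λ - k/μ))μ` is a gap
  · have hsum : (lam + (lam - k / μ)) * μ + k / μ * μ + μ = (2 * lam + 1) * μ := by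
      rw [← Nat.add_mul, ← Nat.succ_mul]
      congr 1
      omega
    exact absurd (by omega) (hgap (lam - k / μ) (Nat.sub_le _ _))

section GappedPowerSum

variable {R ι : Type*} [CommRing R] [IsDomain R] {s : Finset ι} {u β : ι → R} {lam μ : ℕ}

theorem powerSum_lam_mul_ne_zero (hβ : Set.InjOn β s) (hu : ∀ t ∈ s, u t ≠ 0) (hs : s.Nonempty)
    (hzero : ∀ j ∈ gappedRange lam μ, powerSum s u β j = 0) (hcard : #s < lam * μ + μ) :
    powerSum s u β (lam * μ) ≠ 0 := by
  obtain ⟨t₀, ht₀⟩ := hs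
  obtain ⟨j, hj, hne⟩ := exists_powerSum_ne_zero hβ ht₀ (hu t₀ ht₀)
  suffices j = lam * μ from this ▸ hne
  by_contra hj'
  refine hne (hzero j ⟨by nlinarith, fun h hh => ?_⟩)
  rcases Nat.eq_zero_or_pos h with rfl | hpos
  · simpa using hj'
  · have : (lam + h) * μ = lam * μ + h * μ := Nat.add_mul _ _ _
    have : μ ≤ h * μ := Nat.le_mul_of_pos_left μ hpos
    omega

theorem sum_coeff_mul_powerSum_eq_coeff_mul {p : R[X]} (hp : p.natDegree < lam * μ + μ) {D : ℕ}
    (hD : D ≤ lam) (hcoeff : ∀ m, D < m → m ≤ lam → p.coeff (m * μ) = 0)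
    (hzero : ∀ j ∈ gappedRange lam μ, powerSum s u β j = 0) :
    ∑ j ∈ range (p.natDegree + 1), p.coeff j * powerSum s u β ((lam - D) * μ + j) =
      p.coeff (D * μ) * powerSum s u β (lam * μ) := by
  have hshift : ∀ m, (lam - D) * μ + (D + m) * μ = (lam + m) * μ := fun m => by
    rw [← Nat.add_mul]; congr 1; omega
  have hD' : (lam - D) * μ + D * μ = lam * μ := by simpa using hshift 0
  refine (sum_eq_single (D * μ) (fun j hj hne => ?_) fun hD => ?_).trans (by rw [hD'])
  · rw [mul_eq_zero]
    by_cases hhole : ∃ h ≤ lam, (lam - D) * μ + j = (lam + h) * μ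
    · obtain ⟨h, hh, hjh⟩ := hhole
      have hj : j = (D + h) * μ := by have := hshift h; omega
      have hh0 : h ≠ 0 := by rintro rfl; simp [hj] at hne
      left
      rcases le_or_gt (D + h) lam with hle | hgt
      · exact hj ▸ hcoeff (D + h) (by omega) hle
      · refine coeff_eq_zero_of_natDegree_lt ?_
        have : (lam + 1) * μ ≤ (D + h) * μ := Nat.mul_le_mul_right μ hgt
        have : (lam + 1) * μ = lam * μ + μ := Nat.succ_mul lam μ
        omega
    · push Not at hhole
      right
      refine hzero _ ⟨?_, hhole⟩
      have : (2 * lam + 1) * μ = lam * μ + (lam * μ + μ) := by ring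
      have : (lam - D) * μ ≤ lam * μ := Nat.mul_le_mul_right μ (Nat.sub_le lam D)
      have := mem_range.mp hj
      omega
  · rw [coeff_eq_zero_of_natDegree_lt (by simpa using hD), zero_mul]

theorem card_ge_of_powerSum_eq_zero (hβ : Set.InjOn β s) (hβ₀ : ∀ t ∈ s, β t ≠ 0)
    (hu : ∀ t ∈ s, u t ≠ 0) (hs : s.Nonempty)
    (hzero : ∀ j ∈ gappedRange lam μ, powerSum s u β j = 0) : lam * μ + μ ≤ #s := by
  classical
  by_contra! hcard
  set σ : R[X] := ∏ t ∈ s, (X - C (β t))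
  have hσ : σ.natDegree = #s := natDegree_finsetProd_X_sub_C_eq_card s β
  have hroot : ∀ t ∈ s, σ.IsRoot (β t) := fun t ht => by
    rw [IsRoot, eval_prod]
    exact prod_eq_zero ht (by simp)
  have hσ₀ : σ.coeff (0 * μ) ≠ 0 := by
    rw [zero_mul, coeff_zero_eq_eval_zero, eval_prod, prod_ne_zero_iff]
    simpa using hβ₀
  set D := Nat.findGreatest (fun m => σ.coeff (m * μ) ≠ 0) lam
  have hD : σ.coeff (D * μ) ≠ 0 :=
    Nat.findGreatest_spec (P := fun m => σ.coeff (m * μ) ≠ 0) (Nat.zero_le lam) hσ₀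
  have hrec := sum_coeff_mul_powerSum_eq_zero (u := u) hroot ((lam - D) * μ) (Nat.lt_succ_self _)
  rw [sum_coeff_mul_powerSum_eq_coeff_mul (hσ ▸ hcard) (Nat.findGreatest_le lam)
    (fun m h₁ h₂ => not_not.mp (Nat.findGreatest_is_greatest h₁ h₂)) hzero] at hrec
  exact mul_ne_zero hD (powerSum_lam_mul_ne_zero hβ hu hs hzero hcard) hrec

end GappedPowerSum

section Field

variable {K ι : Type*} [Field K] {s : Finset ι} {u β : ι → K}

theorem powerSum_inv (hβ₀ : ∀ t ∈ s, β t ≠ 0) {N j : ℕ} (hj : j ≤ N) :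
    powerSum s (fun t => u t * β t ^ N) (fun t => (β t)⁻¹) j = powerSum s u β (N - j) := by
  obtain ⟨k, rfl⟩ := Nat.exists_eq_add_of_le' hj
  rw [Nat.add_sub_cancel]
  refine sum_congr rfl fun t ht => ?_
  dsimp only
  rw [pow_add, inv_pow, ← mul_assoc, mul_inv_cancel_right₀ (pow_ne_zero j (hβ₀ t ht))]

theorem card_ge_of_powerSum_reflect_eq_zero {lam μ : ℕ} (hβ : Set.InjOn β s)
    (hβ₀ : ∀ t ∈ s, β t ≠ 0) (hu : ∀ t ∈ s, u t ≠ 0) (hs : s.Nonempty)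
    (hzero : ∀ j ∈ gappedRange lam μ, powerSum s u β ((2 * lam + 1) * μ - 1 - j) = 0) :
    lam * μ + μ ≤ #s := by
  refine card_ge_of_powerSum_eq_zero (u := fun t => u t * β t ^ ((2 * lam + 1) * μ - 1))
    (fun t ht t' ht' h => hβ ht ht' (inv_injective h)) (fun t ht => inv_ne_zero (hβ₀ t ht))
    (fun t ht => mul_ne_zero (hu t ht) (pow_ne_zero _ (hβ₀ t ht))) hs fun j hj => ?_
  rw [powerSum_inv hβ₀ (Nat.le_sub_one_of_lt hj.1)]
  exact hzero j hj

end Field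

theorem aeval_pow_add_eq_powerSum {K L : Type*} [Field K] [DecidableEq K] [CommRing L] [Algebra K L]
    {n : ℕ} (c : Fin n → K) (α : L) (i j : ℕ) :
    aeval (α ^ (i + j)) (∑ t : Fin n, C (c t) * X ^ (t : ℕ)) =
      powerSum (univ.filter fun t => c t ≠ 0)
        (fun t => algebraMap K L (c t) * (α ^ (t : ℕ)) ^ i) (fun t => α ^ (t : ℕ)) j := by
  rw [powerSum, map_sum, sum_filter_of_ne fun t _ h => by rintro hc; simp [hc] at h]
  refine sum_congr rfl fun t _ => ?_
  simp only [map_mul, aeval_C, map_pow, aeval_X, ← pow_mul]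
  ring

theorem betti_sala_general
    (n : ℕ)
    (Fq F : Type) [Field Fq] [DecidableEq Fq]
    [Field F] [Algebra Fq F]
    (α : F) (hα : IsPrimitiveRoot α n)
    (g : Polynomial Fq)
    (C : Set (Fin n → Fq))
    (hC : C = { c | g ∣ ∑ i : Fin n, Polynomial.C (c i) * X ^ (i : ℕ) })
    (SC : Set ℕ)
    (hSC : SC = { i | i < n ∧ Polynomial.aeval (α ^ i) g = 0 })
    (wt : (Fin n → Fq) → ℕ)
    (hwt : ∀ c, wt c = (Finset.univ.filter fun i => c i ≠ 0).card)
    (d : ℕ) (hd : IsLeast { w | ∃ c ∈ C, c ≠ 0 ∧ wt c = w } d)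
    (lam μ i₀ : ℕ)
    (heither :
      ((∀ j < lam * μ, (i₀ + j) % n ∈ SC) ∧
        (∀ h ≤ lam, ∀ j, (lam + h) * μ + 1 ≤ j → j + 1 ≤ (lam + h) * μ + μ →
          (i₀ + j) % n ∈ SC))
      ∨
      ((∀ h ≤ lam, ∀ j, h * μ ≤ j → j + 2 ≤ h * μ + μ → (i₀ + j) % n ∈ SC) ∧
        (∀ j, (lam + 1) * μ ≤ j → j + 1 ≤ (2 * lam + 1) * μ → (i₀ + j) % n ∈ SC))) :
    d ≥ lam * μ + μ := by
  obtain ⟨⟨c, hc, hc0, rfl⟩, -⟩ := hd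
  rw [hC] at hc
  rw [hwt]
  set s := univ.filter fun t => c t ≠ 0
  set β := fun t : Fin n => α ^ (t : ℕ)
  set u := fun t : Fin n => algebraMap Fq F (c t) * β t ^ i₀
  have hzero : ∀ j, (i₀ + j) % n ∈ SC → powerSum s u β j = 0 := fun j hj => by
    rw [hSC] at hj
    rw [← aeval_pow_add_eq_powerSum, ← pow_mod_orderOf, ← hα.eq_orderOf]
    exact aeval_eq_zero_of_dvd_aeval_eq_zero hc hj.2
  have hβ : Set.InjOn β s := fun t _ t' _ h => Fin.ext (hα.pow_inj t.isLt t'.isLt h)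
  have hβ₀ : ∀ t ∈ s, β t ≠ 0 := fun t _ => pow_ne_zero _ (hα.ne_zero t.pos.ne')
  have hu : ∀ t ∈ s, u t ≠ 0 := fun t ht =>
    mul_ne_zero ((_root_.map_ne_zero _).mpr (mem_filter.mp ht).2) (pow_ne_zero _ (hβ₀ t ht))
  have hs : s.Nonempty := by
    obtain ⟨t, ht⟩ := Function.ne_iff.mp hc0
    exact ⟨t, mem_filter.mpr ⟨mem_univ t, ht⟩⟩
  rcases heither with ⟨h₁, h₂⟩ | ⟨h₁, h₂⟩
  · exact card_ge_of_powerSum_eq_zero hβ hβ₀ hu hs fun j hj =>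
      hzero j (gappedRange_of_blocks h₁ h₂ j hj)
  · exact card_ge_of_powerSum_reflect_eq_zero hβ hβ₀ hu hs fun j hj =>
      hzero _ (gappedRange_reflect_of_blocks h₁ h₂ j hj)

/-- The Betti–Sala bound.  `C` is a nonzero cyclic code of length `n` over the finite field
`Fq` with `q` elements, given by a monic generator polynomial `g` dividing `X^n - 1`; `SC`
is its complete defining set with respect to a primitive `n`-th root of unity `α` in the
splitting field `F`; `wt` is the Hamming weight and `d` the minimum distance.  `lam` plays
the role of `λ`.  The ranges `j ≤ a + μ - 1` and `j ≤ a + μ - 2` are expressed as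
`j + 1 ≤ a + μ` and `j + 2 ≤ a + μ` to avoid truncated subtraction. -/
theorem betti_sala
    (q n : ℕ) (hq : IsPrimePow q) (hn : 1 ≤ n) (hgcd : Nat.gcd n q = 1)
    (Fq F : Type) [Field Fq] [Fintype Fq] [DecidableEq Fq]
    (hcard : Fintype.card Fq = q)
    [Field F] [Algebra Fq F]
    (hsplit : IsSplittingField Fq F (X ^ n - 1 : Polynomial Fq))
    (α : F) (hα : IsPrimitiveRoot α n)
    (g : Polynomial Fq) (hmonic : g.Monic) (hdvd : g ∣ X ^ n - 1)
    (C : Set (Fin n → Fq))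
    (hC : C = { c | g ∣ ∑ i : Fin n, Polynomial.C (c i) * X ^ (i : ℕ) })
    (SC : Set ℕ)
    (hSC : SC = { i | i < n ∧ Polynomial.aeval (α ^ i) g = 0 })
    (wt : (Fin n → Fq) → ℕ)
    (hwt : ∀ c, wt c = (Finset.univ.filter fun i => c i ≠ 0).card)
    (d : ℕ) (hd : IsLeast { w | ∃ c ∈ C, c ≠ 0 ∧ wt c = w } d)
    (lam μ i₀ : ℕ) (hlam : 1 ≤ lam) (hμ : 1 ≤ μ) (hi₀ : i₀ < n)
    (heither :
      ((∀ j < lam * μ, (i₀ + j) % n ∈ SC) ∧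
        (∀ h ≤ lam, ∀ j, (lam + h) * μ + 1 ≤ j → j + 1 ≤ (lam + h) * μ + μ →
          (i₀ + j) % n ∈ SC))
      ∨
      ((∀ h ≤ lam, ∀ j, h * μ ≤ j → j + 2 ≤ h * μ + μ → (i₀ + j) % n ∈ SC) ∧
        (∀ j, (lam + 1) * μ ≤ j → j + 1 ≤ (2 * lam + 1) * μ → (i₀ + j) % n ∈ SC))) :
    d ≥ lam * μ + μ :=
  betti_sala_general n Fq F α hα g C hC SC hSC wt hwt d hd lam μ i₀ heither
end

section
/- (Blahut's Theorem.) Let C be a cyclic code of length n over F_q with gcd(n,q)=1, let F be the splitting field of x^n−1 over F_q and α ∈ F a primitive n-th root of unity. Then for every word c ∈ C, the Hamming weight of c equals the rank over F of the circulant matrix associated to DFT(c): w(c) = rk(M(DFT(c))). In particular, if C ≠ 0, its distance satisfies d = min{ rk(M(DFT(c))) : c ∈ C, c ≠ 0 }. -/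
open Polynomial

/-- The Discrete Fourier Transform of a vector `a ∈ F^n` with respect to a primitive `n`-th
root of unity `α`: `(dft α a) i = ∑ j, a j * α ^ (i * j)`. -/
def dft {F : Type} [Field F] {n : ℕ} (α : F) (a : Fin n → F) : Fin n → F :=
  fun i => ∑ j : Fin n, a j * α ^ ((i : ℕ) * (j : ℕ))

/-- The circulant matrix associated to a vector `a`, whose first row is `a` and each
subsequent row is the cyclic right shift of the previous one: `M[i,j] = a_{(j-i) mod n}`. -/
def circulantOf {K : Type} [Field K] {n : ℕ} (a : Fin n → K) : Matrix (Fin n) (Fin n) K :=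
  Matrix.of fun i j => a (j - i)

/-!
With `V = (α ^ (j * k))` and `W = (α⁻¹ ^ (i * k))`, the relation `α ^ n = 1` gives the
factorisation `M(DFT(a)) = W * diagonal a * V`. Both Vandermonde matrices are invertible
because the powers of a primitive `n`-th root of unity below `n` are distinct, so the rank of
`M(DFT(a))` is that of `diagonal a`, i.e. the number of nonzero entries of `a`.
-/
theorem IsPrimitiveRoot.det_vandermonde_pow_ne_zero {R : Type*} [CommRing R] [IsDomain R]
    {n : ℕ} {β : R} (hβ : IsPrimitiveRoot β n) :
    (Matrix.vandermonde fun k : Fin n => β ^ (k : ℕ)).det ≠ 0 :=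
  Matrix.det_vandermonde_ne_zero_iff.mpr fun i j h => Fin.ext (hβ.pow_inj i.isLt j.isLt h)

theorem Fin.val_sub_add_val_modEq {n : ℕ} (i j : Fin n) :
    ((j - i : Fin n) : ℕ) + i ≡ j [MOD n] := by
  rw [Fin.val_sub]
  calc (n - i + j) % n + i ≡ n - i + j + i [MOD n] := (Nat.mod_modEq _ n).add_right _
    _ = n + j := by omega
    _ ≡ j [MOD n] := Nat.add_modEq_left

theorem circulantOf_dft_eq {F : Type} [Field F] {n : ℕ} {α : F} (hα : α ^ n = 1)
    (a : Fin n → F) :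
    circulantOf (dft α a) = Matrix.vandermonde (fun k : Fin n => α⁻¹ ^ (k : ℕ)) *
      Matrix.diagonal a * Matrix.vandermonde (fun k : Fin n => α ^ (k : ℕ)) := by
  ext i j
  have hαne : α ≠ 0 := by
    rintro rfl
    exact zero_ne_one ((zero_pow (Fin.pos i).ne').symm.trans hα)
  rw [Matrix.mul_apply]
  simp only [circulantOf, dft, Matrix.of_apply, Matrix.mul_diagonal, Matrix.vandermonde_apply]
  refine Finset.sum_congr rfl fun k _ => ?_
  have hshift : α ^ (((j - i : Fin n) : ℕ) * k) * α ^ ((i : ℕ) * k) = α ^ ((j : ℕ) * k) := by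
    rw [← pow_add, ← add_mul]
    exact pow_eq_pow_of_modEq ((Fin.val_sub_add_val_modEq i j).mul_right _) hα
  rw [← pow_mul, ← pow_mul, inv_pow, mul_comm (k : ℕ) j, ← hshift]
  field_simp

theorem rank_circulantOf_dft {F : Type} [Field F] [DecidableEq F] {n : ℕ} {α : F}
    (hα : IsPrimitiveRoot α n) (a : Fin n → F) :
    (circulantOf (dft α a)).rank = (Finset.univ.filter fun i => a i ≠ 0).card := by
  rw [circulantOf_dft_eq hα.pow_eq_one, Matrix.rank_mul_eq_left_of_isUnit_det _ _
      hα.det_vandermonde_pow_ne_zero.isUnit,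
    Matrix.rank_mul_eq_right_of_isUnit_det _ _ hα.inv.det_vandermonde_pow_ne_zero.isUnit,
    Matrix.rank_diagonal, Fintype.card_subtype]

theorem blahut_general
    (n : ℕ)
    (Fq F : Type) [Field Fq] [DecidableEq Fq]
    [Field F] [Algebra Fq F]
    (α : F) (hα : IsPrimitiveRoot α n)
    (C : Set (Fin n → Fq))
    (wt : (Fin n → Fq) → ℕ)
    (hwt : ∀ c, wt c = (Finset.univ.filter fun i => c i ≠ 0).card) :
    (∀ c ∈ C, wt c = (circulantOf (dft α fun j => algebraMap Fq F (c j))).rank) ∧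
    (∀ d : ℕ, IsLeast { w | ∃ c ∈ C, c ≠ 0 ∧ wt c = w } d →
      IsLeast { k | ∃ c ∈ C, c ≠ 0 ∧
        (circulantOf (dft α fun j => algebraMap Fq F (c j))).rank = k } d) := by
  classical
  have weight_eq_rank (c : Fin n → Fq) :
      wt c = (circulantOf (dft α fun j => algebraMap Fq F (c j))).rank := by
    simp only [rank_circulantOf_dft hα, hwt, ne_eq, map_eq_zero]
  refine ⟨fun c _ => weight_eq_rank c, fun d hd => ?_⟩
  simpa only [← weight_eq_rank] using hd

/-- Blahut's theorem: the Hamming weight of any codeword of a cyclic code equals the rank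
of the circulant matrix associated to its Discrete Fourier Transform, and consequently the
distance of a nonzero cyclic code is the minimum of these ranks over nonzero codewords. -/
theorem blahut
    (q n : ℕ) (hq : IsPrimePow q) (hn : 1 ≤ n) (hgcd : Nat.gcd n q = 1)
    (Fq F : Type) [Field Fq] [Fintype Fq] [DecidableEq Fq]
    (hcard : Fintype.card Fq = q)
    [Field F] [Algebra Fq F]
    (hsplit : IsSplittingField Fq F (X ^ n - 1 : Polynomial Fq))
    (α : F) (hα : IsPrimitiveRoot α n)
    (g : Polynomial Fq) (hmonic : g.Monic) (hdvd : g ∣ X ^ n - 1)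
    (C : Set (Fin n → Fq))
    (hC : C = { c | g ∣ ∑ i : Fin n, Polynomial.C (c i) * X ^ (i : ℕ) })
    (wt : (Fin n → Fq) → ℕ)
    (hwt : ∀ c, wt c = (Finset.univ.filter fun i => c i ≠ 0).card) :
    (∀ c ∈ C, wt c = (circulantOf (dft α fun j => algebraMap Fq F (c j))).rank) ∧
    (∀ d : ℕ, IsLeast { w | ∃ c ∈ C, c ≠ 0 ∧ wt c = w } d →
      IsLeast { k | ∃ c ∈ C, c ≠ 0 ∧
        (circulantOf (dft α fun j => algebraMap Fq F (c j))).rank = k } d) :=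
  blahut_general n Fq F α hα C wt hwt
end

section
/- Let n, m, r, s be natural numbers such that n ≥ m+r, m ≥ 1, s ≥ 1 and gcd(m+r, n) ≤ m. Then for every i ∈ {1,…,n} there exist k ∈ ℕ and t with 1 ≤ t ≤ m such that i ≡ (s+k)(m+r) + t (mod n). -/
/-!
Write `g = gcd(m + r, n)` and `i = g e + t` with `1 ≤ t ≤ g ≤ m`. By Bézout the multiples of
`m + r` modulo `n` are exactly the multiples of `g`, so `g e ≡ c (m + r)` for some `c`, and
since only `s + k` modulo `n` matters, `k` can be chosen with `s + k ≡ c`.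
-/

namespace Nat

theorem exists_eq_mul_add_of_one_le {g i : ℕ} (hg : 0 < g) (hi : 1 ≤ i) :
    ∃ e t, 1 ≤ t ∧ t ≤ g ∧ g * e + t = i := by
  refine ⟨(i - 1) / g, (i - 1) % g + 1, le_add_left 1 _, mod_lt _ hg, ?_⟩
  have := div_add_mod (i - 1) g
  omega

theorem exists_mul_modEq_of_gcd_dvd {a n x : ℕ} (hn : 0 < n) (hx : gcd a n ∣ x) :
    ∃ c, a * c ≡ x [MOD n] := by
  obtain ⟨e, rfl⟩ := hx
  rcases (le_of_dvd hn (gcd_dvd_right a n)).lt_or_eq with hlt | heq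
  · obtain ⟨c, -, hc⟩ := exists_mul_mod_eq_gcd hlt
    refine ⟨c * e, ?_⟩
    rw [← mul_assoc]
    exact ModEq.mul_right e (by rwa [ModEq, mod_eq_of_lt hlt])
  · refine ⟨0, ?_⟩
    rw [heq, mul_zero]
    exact (modEq_zero_iff_dvd.mpr (dvd_mul_right n e)).symm

theorem exists_add_modEq_s11 {n : ℕ} (hn : 0 < n) (s c : ℕ) : ∃ k, s + k ≡ c [MOD n] := by
  refine ⟨c + (n - 1) * s, ?_⟩
  have : s + (c + (n - 1) * s) = c + n * s := by
    have := Nat.sub_one_mul n s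
    have := Nat.le_mul_of_pos_left s hn
    omega
  rw [this]
  exact add_modulus_mul_modEq_iff.mpr rfl

end Nat

theorem secondary_pivot_exists_general (n m r s : ℕ)
    (hgcd : Nat.gcd (m + r) n ≤ m) :
    ∀ i, 1 ≤ i → i ≤ n → ∃ k t : ℕ, 1 ≤ t ∧ t ≤ m ∧
      i % n = ((s + k) * (m + r) + t) % n := by
  intro i hi1 hin
  have hn : 0 < n := by omega
  obtain ⟨e, t, ht1, htg, rfl⟩ :=
    Nat.exists_eq_mul_add_of_one_le (Nat.gcd_pos_of_pos_right (m + r) hn) hi1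
  obtain ⟨c, hc⟩ := Nat.exists_mul_modEq_of_gcd_dvd hn (dvd_mul_right _ e)
  obtain ⟨k, hk⟩ := Nat.exists_add_modEq_s11 hn s c
  refine ⟨k, t, ht1, htg.trans hgcd, ?_⟩
  calc _ ≡ (m + r) * c + t [MOD n] := hc.symm.add_right t
    _ ≡ (s + k) * (m + r) + t [MOD n] := by
      rw [mul_comm]
      exact (hk.symm.mul_right _).add_right t

/-- The number-theoretic lemma guaranteeing the existence of the secondary pivot:
if `n ≥ m + r`, `m ≥ 1`, `s ≥ 1` and `gcd(m+r, n) ≤ m`, then every `i ∈ {1, …, n}` is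
congruent modulo `n` to `(s+k)(m+r) + t` for some `k ∈ ℕ` and some `1 ≤ t ≤ m`. -/
theorem secondary_pivot_exists (n m r s : ℕ)
    (hn : m + r ≤ n) (hm : 1 ≤ m) (hs : 1 ≤ s)
    (hgcd : Nat.gcd (m + r) n ≤ m) :
    ∀ i, 1 ≤ i → i ≤ n → ∃ k t : ℕ, 1 ≤ t ∧ t ≤ m ∧
      i % n = ((s + k) * (m + r) + t) % n :=
  secondary_pivot_exists_general n m r s hgcd
end
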